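/- Let L be an n-dimensional subspace of Z_2^{2n} with symplectic dual L^⊥ spanned by u_1,...,u_n, and let h_1,...,h_n be a basis of L extended by s_1,...,s_n to a basis of Z_2^{2n}. Then the 4n operators {V_{u_i} ⊗ I ⊗ V_{u_i} ⊗ I}, {V_{h_i} ⊗ V_{h_i} ⊗ I ⊗ I}, {I ⊗ I ⊗ V_{h_i} ⊗ V_{h_i}}, {V_{s_i}^{⊗4}} are independent, i.e., the only product of a subset of them (over F_2 exponents) equal to ±identity is the empty product; consequently the state |σ_L⟩ = 2^{-n/2} ∑_{u ∈ L^⊥} |Φ_u⟩ ⊗ |Φ_u⟩ is a 4n-qubit stabilizer state stabilized by these 4n operators. -/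

import Mathlib

open Kronecker

/-- The phaseless Weyl operator V_{(a,b)} = ⊗_{i=1}^n Z^{a_i} X^{b_i} on n qubits, acting on
basis states by Z^a X^b |s⟩ = (-1)^{a·(s⊕b)} |s ⊕ b⟩. -/
noncomputable def WeylV {n : ℕ} (a b : Fin n → ZMod 2) :
    Matrix (Fin n → ZMod 2) (Fin n → ZMod 2) ℂ :=
  Matrix.of fun t s => if t = s + b then (-1 : ℂ) ^ (∑ i, a i * (s i + b i)).val else 0

/-- The symplectic form [x, y] = a·d + b·c mod 2 on Z_2^{2n}, for x = (a,b), y = (c,d). -/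
def sympForm {n : ℕ} (x y : (Fin n → ZMod 2) × (Fin n → ZMod 2)) : ZMod 2 :=
  ∑ i, (x.1 i * y.2 i + x.2 i * y.1 i)
/-- The 2n-qubit Bell state |Φ_y⟩ = (V_y ⊗ I)|Φ_0⟩, with |Φ_0⟩ = 2^{-n/2} ∑_x |x⟩⊗|x⟩. -/
noncomputable def BellPhi {n : ℕ} (y : (Fin n → ZMod 2) × (Fin n → ZMod 2)) :
    (Fin n → ZMod 2) × (Fin n → ZMod 2) → ℂ :=
  (WeylV y.1 y.2 ⊗ₖ (1 : Matrix (Fin n → ZMod 2) (Fin n → ZMod 2) ℂ)).mulVec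
    (fun p => if p.1 = p.2 then ((Real.sqrt (2 ^ n))⁻¹ : ℝ) else 0)

/-- The 2n-qubit operator V_v ⊗ I. -/
noncomputable def VtimesI {n : ℕ} (v : (Fin n → ZMod 2) × (Fin n → ZMod 2)) :
    Matrix ((Fin n → ZMod 2) × (Fin n → ZMod 2)) ((Fin n → ZMod 2) × (Fin n → ZMod 2)) ℂ :=
  WeylV v.1 v.2 ⊗ₖ (1 : Matrix (Fin n → ZMod 2) (Fin n → ZMod 2) ℂ)

/-- The 2n-qubit operator V_v ⊗ V_v. -/
noncomputable def VtimesV {n : ℕ} (v : (Fin n → ZMod 2) × (Fin n → ZMod 2)) :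
    Matrix ((Fin n → ZMod 2) × (Fin n → ZMod 2)) ((Fin n → ZMod 2) × (Fin n → ZMod 2)) ℂ :=
  WeylV v.1 v.2 ⊗ₖ WeylV v.1 v.2

/-- The 4n-qubit operator V_v ⊗ I ⊗ V_v ⊗ I. -/
noncomputable def opU {n : ℕ} (v : (Fin n → ZMod 2) × (Fin n → ZMod 2)) :=
  VtimesI v ⊗ₖ VtimesI v

/-- The 4n-qubit operator V_v ⊗ V_v ⊗ I ⊗ I. -/
noncomputable def opW1 {n : ℕ} (v : (Fin n → ZMod 2) × (Fin n → ZMod 2)) :=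
  VtimesV v ⊗ₖ
    (1 : Matrix ((Fin n → ZMod 2) × (Fin n → ZMod 2))
      ((Fin n → ZMod 2) × (Fin n → ZMod 2)) ℂ)

/-- The 4n-qubit operator I ⊗ I ⊗ V_v ⊗ V_v. -/
noncomputable def opW2 {n : ℕ} (v : (Fin n → ZMod 2) × (Fin n → ZMod 2)) :=
  (1 : Matrix ((Fin n → ZMod 2) × (Fin n → ZMod 2))
    ((Fin n → ZMod 2) × (Fin n → ZMod 2)) ℂ) ⊗ₖ VtimesV v

/-- The 4n-qubit operator V_v ⊗ V_v ⊗ V_v ⊗ V_v. -/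
noncomputable def opS {n : ℕ} (v : (Fin n → ZMod 2) × (Fin n → ZMod 2)) :=
  VtimesV v ⊗ₖ VtimesV v

/-- The 4n-qubit state |σ_L⟩ = 2^{-n/2} ∑_{y ∈ L^⊥} |Φ_y⟩ ⊗ |Φ_y⟩, with L^⊥ enumerated
via coefficients c ∈ Z_2^n over the basis u of L^⊥. -/
noncomputable def sigmaVec {n : ℕ}
    (u : Fin n → (Fin n → ZMod 2) × (Fin n → ZMod 2)) :
    ((Fin n → ZMod 2) × (Fin n → ZMod 2)) × ((Fin n → ZMod 2) × (Fin n → ZMod 2)) → ℂ :=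
  fun p => (((Real.sqrt (2 ^ n))⁻¹ : ℝ) : ℂ) *
    ∑ c : Fin n → ZMod 2, BellPhi (∑ i, c i • u i) p.1 * BellPhi (∑ i, c i • u i) p.2

noncomputable def chi (x : ZMod 2) : ℂ := (-1) ^ x.val

lemma zmodval0 : (0 : ZMod 2).val = 0 := rfl
lemma zmodval1 : (1 : ZMod 2).val = 1 := rfl
lemma zmodval2 : (2 : ZMod 2).val = 0 := rfl

lemma chi_add (x y : ZMod 2) : chi (x + y) = chi x * chi y := by
  rcases (by decide : ∀ y : ZMod 2, y = 0 ∨ y = 1) x with rfl | rfl <;>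
    rcases (by decide : ∀ y : ZMod 2, y = 0 ∨ y = 1) y with rfl | rfl <;>
    norm_num [chi, zmodval0, zmodval1, zmodval2, (by decide : (1 + 1 : ZMod 2) = 0)]

lemma chi_mul_self (x : ZMod 2) : chi x * chi x = 1 := by
  rcases (by decide : ∀ y : ZMod 2, y = 0 ∨ y = 1) x with rfl | rfl <;>
    norm_num [chi, zmodval0, zmodval1]

lemma chi_ne_zero (x : ZMod 2) : chi x ≠ 0 := by
  fin_cases x <;> norm_num [chi, zmodval0, zmodval1]

lemma chi_zero : chi 0 = 1 := rfl

lemma chi_eq_one {x : ZMod 2} (hx : chi x = 1) : x = 0 := by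
  rcases (by decide : ∀ y : ZMod 2, y = 0 ∨ y = 1) x with rfl | rfl
  · rfl
  · exfalso; rw [chi, zmodval1] at hx; norm_num at hx

lemma weyl_apply {n : ℕ} (a b : Fin n → ZMod 2) (t s : Fin n → ZMod 2) :
    WeylV a b t s = if t = s + b then chi (∑ i, a i * (s i + b i)) else 0 := rfl

lemma z2_addbb {n : ℕ} (s b : Fin n → ZMod 2) : s + b + b = s := by
  funext i
  simp only [Pi.add_apply]
  exact (by decide : ∀ x y : ZMod 2, x + y + y = x) (s i) (b i)

lemma weyl_mul {n : ℕ} (a b c d : Fin n → ZMod 2) (t s : Fin n → ZMod 2) :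
    ∑ r, WeylV a b t r * WeylV c d r s
      = chi (∑ i, c i * b i) * WeylV (a + c) (b + d) t s := by
  rw [Finset.sum_eq_single (s + d)]
  · simp only [weyl_apply, if_pos rfl, if_true]
    by_cases h : t = s + (b + d)
    · have h' : t = s + d + b := by rw [h, add_assoc, add_comm d b]
      rw [if_pos h', if_pos h, ← chi_add, ← chi_add, ← Finset.sum_add_distrib,
        ← Finset.sum_add_distrib]
      congr 1
      apply Finset.sum_congr rfl
      intro i _
      simp only [Pi.add_apply]
      exact (by decide : ∀ A B C D S : ZMod 2,
        A * (S + D + B) + C * (S + D) = C * B + (A + C) * (S + (B + D)))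
        (a i) (b i) (c i) (d i) (s i)
    · have h' : ¬ t = s + d + b := by
        intro hh; apply h; rw [hh, add_assoc, add_comm d b]
      rw [if_neg h', if_neg h, zero_mul, mul_zero]
  · intro r _ hr
    rw [weyl_apply c d r s, if_neg (by intro hh; exact hr hh), mul_zero]
  · intro hmem; exact absurd (Finset.mem_univ _) hmem

lemma cond_iff {n : ℕ} (t q b : Fin n → ZMod 2) : t = q + b ↔ q = t + b :=
  ⟨fun hh => by rw [hh, z2_addbb], fun hh => by rw [hh, z2_addbb]⟩

lemma weyl_apply' {n : ℕ} (a b : Fin n → ZMod 2) (t s : Fin n → ZMod 2) :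
    WeylV a b t s = if t = s + b then chi (∑ i, a i * t i) else 0 := by
  rw [weyl_apply]
  by_cases hc : t = s + b
  · rw [if_pos hc, if_pos hc]
    congr 1
    apply Finset.sum_congr rfl
    intro i _
    have := congrFun hc i
    simp only [Pi.add_apply] at this
    rw [← this]
  · rw [if_neg hc, if_neg hc]

lemma weyl_ne_zero_cond {n : ℕ} {a b : Fin n → ZMod 2} {t s : Fin n → ZMod 2}
    (hq : s ≠ t + b) : WeylV a b t s = 0 := by
  rw [weyl_apply', if_neg (fun hh => hq ((cond_iff t s b).1 hh))]

lemma weyl_pair {n : ℕ} (a1 b1 a2 b2 c d : Fin n → ZMod 2) (t1 t2 : Fin n → ZMod 2) :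
    ∑ q1, ∑ q2, WeylV a1 b1 t1 q1 * WeylV a2 b2 t2 q2 * WeylV c d q1 q2
      = chi (∑ i, (a2 i * b2 i + c i * b1 i + a2 i * b1 i + a2 i * d i)) *
        WeylV (a1 + c + a2) (b1 + d + b2) t1 t2 := by
  rw [Finset.sum_eq_single (t1 + b1)]
  · rw [Finset.sum_eq_single (t2 + b2)]
    · rw [weyl_apply' a1 b1, weyl_apply' a2 b2, weyl_apply' c d,
        weyl_apply' (a1 + c + a2)]
      rw [if_pos ((cond_iff t1 (t1+b1) b1).2 rfl), if_pos ((cond_iff t2 (t2+b2) b2).2 rfl)]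
      by_cases hc : t1 = t2 + (b1 + d + b2)
      · have hc' : t1 + b1 = (t2 + b2) + d := by
          rw [hc]; funext i; simp only [Pi.add_apply]
          exact (by decide : ∀ T B1 D B2 : ZMod 2,
            T + (B1 + D + B2) + B1 = T + B2 + D) (t2 i) (b1 i) (d i) (b2 i)
        rw [if_pos hc', if_pos hc, ← chi_add, ← chi_add, ← chi_add,
          ← Finset.sum_add_distrib, ← Finset.sum_add_distrib, ← Finset.sum_add_distrib]
        congr 1
        apply Finset.sum_congr rfl
        intro i _
        have ht1 : t1 i = t2 i + (b1 i + d i + b2 i) := by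
          have := congrFun hc i; simpa only [Pi.add_apply] using this
        simp only [Pi.add_apply]
        rw [ht1]
        exact (by decide : ∀ A1 B1 A2 B2 C D T2 : ZMod 2,
          A1 * (T2 + (B1 + D + B2)) + A2 * T2 + C * (T2 + (B1 + D + B2) + B1)
            = (A2 * B2 + C * B1 + A2 * B1 + A2 * D)
              + (A1 + C + A2) * (T2 + (B1 + D + B2)))
          (a1 i) (b1 i) (a2 i) (b2 i) (c i) (d i) (t2 i)
      · have hc' : ¬ (t1 + b1 = (t2 + b2) + d) := by
          intro hh; apply hc
          have := congrArg (fun z => z + b1) hh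
          simp only [z2_addbb] at this
          rw [this]; funext i; simp only [Pi.add_apply]
          exact (by decide : ∀ T B1 D B2 : ZMod 2,
            T + B2 + D + B1 = T + (B1 + D + B2)) (t2 i) (b1 i) (d i) (b2 i)
        rw [if_neg hc', if_neg hc, mul_zero, mul_zero]
    · intro q2 _ hq2
      rw [weyl_ne_zero_cond hq2, mul_zero, zero_mul]
    · intro hmem; exact absurd (Finset.mem_univ _) hmem
  · intro q1 _ hq1
    rw [Finset.sum_eq_zero]
    intro q2 _
    rw [weyl_ne_zero_cond hq1, zero_mul, zero_mul]
  · intro hmem; exact absurd (Finset.mem_univ _) hmem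

lemma Bell_apply {n : ℕ} (y : (Fin n → ZMod 2) × (Fin n → ZMod 2))
    (p : (Fin n → ZMod 2) × (Fin n → ZMod 2)) :
    BellPhi y p = (((Real.sqrt (2 ^ n))⁻¹ : ℝ) : ℂ) * WeylV y.1 y.2 p.1 p.2 := by
  simp only [BellPhi, Matrix.mulVec, dotProduct, Fintype.sum_prod_type,
    Matrix.kroneckerMap_apply, Matrix.one_apply, mul_ite, ite_mul, mul_one, mul_zero,
    zero_mul, Finset.sum_ite_eq, Finset.sum_ite_eq', Finset.mem_univ, if_true]
  ring

lemma quad_mulVec {n : ℕ}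
    (A B C D : Matrix (Fin n → ZMod 2) (Fin n → ZMod 2) ℂ)
    (f : ((Fin n → ZMod 2) × (Fin n → ZMod 2)) × ((Fin n → ZMod 2) × (Fin n → ZMod 2)) → ℂ)
    (p : ((Fin n → ZMod 2) × (Fin n → ZMod 2)) × ((Fin n → ZMod 2) × (Fin n → ZMod 2))) :
    (((A ⊗ₖ B) ⊗ₖ (C ⊗ₖ D)).mulVec f) p
      = ∑ q1, ∑ q2, ∑ q3, ∑ q4,
          A p.1.1 q1 * B p.1.2 q2 * C p.2.1 q3 * D p.2.2 q4 * f ((q1, q2), (q3, q4)) := by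
  simp only [Matrix.mulVec, dotProduct, Fintype.sum_prod_type,
    Matrix.kroneckerMap_apply]
  refine Finset.sum_congr rfl fun q1 _ => Finset.sum_congr rfl fun q2 _ =>
    Finset.sum_congr rfl fun q3 _ => Finset.sum_congr rfl fun q4 _ => ?_
  ring

abbrev Vn (n : ℕ) := (Fin n → ZMod 2) × (Fin n → ZMod 2)

noncomputable def Wv (x : Vn n) : Matrix (Fin n → ZMod 2) (Fin n → ZMod 2) ℂ :=
  WeylV x.1 x.2

noncomputable def quadOf (q : Vn n × Vn n × Vn n × Vn n) :
    Matrix ((Vn n) × (Vn n)) ((Vn n) × (Vn n)) ℂ :=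
  (Wv q.1 ⊗ₖ Wv q.2.1) ⊗ₖ (Wv q.2.2.1 ⊗ₖ Wv q.2.2.2)

lemma weyl_zero : WeylV (0 : Fin n → ZMod 2) 0 = 1 := by
  ext t s
  rw [weyl_apply', Matrix.one_apply]
  simp [chi_zero, eq_comm]

lemma weyl_mul_matrix (a b c d : Fin n → ZMod 2) :
    WeylV a b * WeylV c d = chi (∑ i, c i * b i) • WeylV (a + c) (b + d) := by
  ext t s
  rw [Matrix.mul_apply, weyl_mul, Matrix.smul_apply, smul_eq_mul]

lemma Wv_mul (x y : Vn n) :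
    Wv x * Wv y = chi (∑ i, y.1 i * x.2 i) • Wv (x + y) := by
  unfold Wv
  rw [weyl_mul_matrix]
  rfl

lemma quad_zero : quadOf (0 : Vn n × Vn n × Vn n × Vn n) = 1 := by
  unfold quadOf Wv
  simp only [Prod.fst_zero, Prod.snd_zero, weyl_zero, Matrix.one_kronecker_one]

lemma quad_mul (q r : Vn n × Vn n × Vn n × Vn n) :
    ∃ z : ZMod 2, quadOf q * quadOf r = chi z • quadOf (q + r) := by
  refine ⟨(∑ i, r.1.1 i * q.1.2 i) + (∑ i, r.2.1.1 i * q.2.1.2 i)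
    + (∑ i, r.2.2.1.1 i * q.2.2.1.2 i) + (∑ i, r.2.2.2.1 i * q.2.2.2.2 i), ?_⟩
  unfold quadOf
  rw [← Matrix.mul_kronecker_mul, ← Matrix.mul_kronecker_mul, ← Matrix.mul_kronecker_mul,
    Wv_mul, Wv_mul, Wv_mul, Wv_mul]
  simp only [Matrix.smul_kronecker, Matrix.kronecker_smul, smul_smul, chi_add,
    Prod.fst_add, Prod.snd_add]
  ring_nf

lemma list_prod_quad (l : List (Vn n × Vn n × Vn n × Vn n)) :
    ∃ z : ZMod 2, (l.map quadOf).prod = chi z • quadOf l.sum := by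
  induction l with
  | nil => exact ⟨0, by simp [chi_zero, quad_zero]⟩
  | cons q l ih =>
    obtain ⟨z, hz⟩ := ih
    obtain ⟨z', hz'⟩ := quad_mul q l.sum
    refine ⟨z + z', ?_⟩
    rw [List.map_cons, List.prod_cons, hz, Matrix.mul_smul, hz', smul_smul,
      List.sum_cons, chi_add]

lemma quad_apply (q : Vn n × Vn n × Vn n × Vn n) (t s : (Vn n) × (Vn n)) :
    quadOf q t s = Wv q.1 t.1.1 s.1.1 * Wv q.2.1 t.1.2 s.1.2
      * (Wv q.2.2.1 t.2.1 s.2.1 * Wv q.2.2.2 t.2.2 s.2.2) := by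
  unfold quadOf
  rw [Matrix.kroneckerMap_apply, Matrix.kroneckerMap_apply, Matrix.kroneckerMap_apply]

lemma single_dot (a : Fin n → ZMod 2) (j : Fin n) :
    (∑ i, a i * (Pi.single j 1 : Fin n → ZMod 2) i) = a j := by
  rw [Finset.sum_eq_single j]
  · simp
  · intro i _ hij
    rw [Pi.single_apply, if_neg hij, mul_zero]
  · intro hm; exact absurd (Finset.mem_univ _) hm

lemma weyl_diag (a t : Fin n → ZMod 2) :
    WeylV a 0 t t = chi (∑ i, a i * t i) := by
  rw [weyl_apply', if_pos (add_zero t).symm]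

lemma quad_inj {q : Vn n × Vn n × Vn n × Vn n} {w : ℂ} (hw : w ≠ 0)
    (hq : quadOf q = w • (1 : Matrix ((Vn n) × (Vn n)) ((Vn n) × (Vn n)) ℂ)) :
    q = 0 := by
  obtain ⟨⟨a1, b1⟩, ⟨a2, b2⟩, ⟨a3, b3⟩, a4, b4⟩ := q
  have he : ∀ t1 t2 t3 t4 s1 s2 s3 s4 : Fin n → ZMod 2,
      WeylV a1 b1 t1 s1 * WeylV a2 b2 t2 s2 * (WeylV a3 b3 t3 s3 * WeylV a4 b4 t4 s4)
        = w * (if (((t1, t2), (t3, t4)) : (Vn n) × (Vn n)) = ((s1, s2), (s3, s4))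
            then 1 else 0) := by
    intro t1 t2 t3 t4 s1 s2 s3 s4
    have h0 := congrFun (congrFun hq (((t1, t2), (t3, t4)) : (Vn n) × (Vn n)))
      (((s1, s2), (s3, s4)) : (Vn n) × (Vn n))
    rw [quad_apply] at h0
    dsimp only [Wv] at h0
    rw [h0, Matrix.smul_apply, Matrix.one_apply, smul_eq_mul]
  have hval : ∀ (a b : Fin n → ZMod 2), WeylV a b b 0 = chi (∑ i, a i * b i) := by
    intro a b
    rw [weyl_apply', if_pos (zero_add b).symm]
  have hb : (((b1, b2), (b3, b4)) : (Vn n) × (Vn n)) = ((0, 0), (0, 0)) := by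
    by_contra hne
    have h1 := he b1 b2 b3 b4 0 0 0 0
    rw [if_neg hne, mul_zero] at h1
    simp only [hval] at h1
    exact (mul_ne_zero (mul_ne_zero (chi_ne_zero _) (chi_ne_zero _))
      (mul_ne_zero (chi_ne_zero _) (chi_ne_zero _))) h1
  obtain ⟨⟨hb1, hb2⟩, hb3, hb4⟩ : (b1 = 0 ∧ b2 = 0) ∧ b3 = 0 ∧ b4 = 0 := by
    simpa [Prod.ext_iff] using hb
  subst hb1; subst hb2; subst hb3; subst hb4
  have hdiag : ∀ t1 t2 t3 t4 : Fin n → ZMod 2,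
      chi (∑ i, a1 i * t1 i) * chi (∑ i, a2 i * t2 i)
        * (chi (∑ i, a3 i * t3 i) * chi (∑ i, a4 i * t4 i)) = w := by
    intro t1 t2 t3 t4
    have h1 := he t1 t2 t3 t4 t1 t2 t3 t4
    rw [if_pos rfl, mul_one] at h1
    simpa only [weyl_diag] using h1
  have hw1 : w = 1 := by
    have h1 := hdiag 0 0 0 0
    simp only [Pi.zero_apply, mul_zero, Finset.sum_const_zero, chi_zero, mul_one] at h1
    exact h1.symm
  subst hw1
  have ha1 : a1 = 0 := by
    funext j
    have h1 := hdiag (Pi.single j 1) 0 0 0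
    simp only [Pi.zero_apply, mul_zero, Finset.sum_const_zero, chi_zero, mul_one,
      single_dot] at h1
    exact chi_eq_one h1
  have ha2 : a2 = 0 := by
    funext j
    have h1 := hdiag 0 (Pi.single j 1) 0 0
    simp only [Pi.zero_apply, mul_zero, Finset.sum_const_zero, chi_zero, mul_one, one_mul,
      single_dot] at h1
    exact chi_eq_one h1
  have ha3 : a3 = 0 := by
    funext j
    have h1 := hdiag 0 0 (Pi.single j 1) 0
    simp only [Pi.zero_apply, mul_zero, Finset.sum_const_zero, chi_zero, mul_one, one_mul,
      single_dot] at h1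
    exact chi_eq_one h1
  have ha4 : a4 = 0 := by
    funext j
    have h1 := hdiag 0 0 0 (Pi.single j 1)
    simp only [Pi.zero_apply, mul_zero, Finset.sum_const_zero, chi_zero, mul_one, one_mul,
      single_dot] at h1
    exact chi_eq_one h1
  simp [Prod.ext_iff, ha1, ha2, ha3, ha4]

lemma z2_aba {n : ℕ} (x y : Fin n → ZMod 2) : x + y + x = y := by
  funext i
  simp only [Pi.add_apply]
  exact (by decide : ∀ a b : ZMod 2, a + b + a = b) (x i) (y i)

noncomputable def gvec {n : ℕ} (y : Vn n) : (Vn n) × (Vn n) → ℂ :=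
  fun p => WeylV y.1 y.2 p.1.1 p.1.2 * WeylV y.1 y.2 p.2.1 p.2.2

def phiW {n : ℕ} (x1 x2 y : Vn n) : ZMod 2 :=
  ∑ i, (x2.1 i * x2.2 i + y.1 i * x1.2 i + x2.1 i * x1.2 i + x2.1 i * y.2 i)

lemma sum_factor {n : ℕ} (F G : (Fin n → ZMod 2) → (Fin n → ZMod 2) → ℂ) :
    ∑ q1, ∑ q2, ∑ q3, ∑ q4, F q1 q2 * G q3 q4
      = (∑ q1, ∑ q2, F q1 q2) * (∑ q3, ∑ q4, G q3 q4) := by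
  rw [Finset.sum_mul_sum]
  refine Finset.sum_congr rfl fun q1 _ => ?_
  rw [Finset.sum_comm]
  refine Finset.sum_congr rfl fun q3 _ => ?_
  exact (Finset.sum_mul_sum _ _ _ _).symm

lemma quad_mulVec_g {n : ℕ} (a1 b1 a2 b2 a3 b3 a4 b4 : Fin n → ZMod 2) (y : Vn n)
    (p : (Vn n) × (Vn n)) :
    (((WeylV a1 b1 ⊗ₖ WeylV a2 b2) ⊗ₖ (WeylV a3 b3 ⊗ₖ WeylV a4 b4)).mulVec (gvec y)) p
      = chi (phiW (a1, b1) (a2, b2) y) * chi (phiW (a3, b3) (a4, b4) y) *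
        (WeylV (a1 + y.1 + a2) (b1 + y.2 + b2) p.1.1 p.1.2 *
         WeylV (a3 + y.1 + a4) (b3 + y.2 + b4) p.2.1 p.2.2) := by
  rw [quad_mulVec]
  have h1 := weyl_pair a1 b1 a2 b2 y.1 y.2 p.1.1 p.1.2
  have h2 := weyl_pair a3 b3 a4 b4 y.1 y.2 p.2.1 p.2.2
  calc ∑ q1, ∑ q2, ∑ q3, ∑ q4,
        WeylV a1 b1 p.1.1 q1 * WeylV a2 b2 p.1.2 q2 * WeylV a3 b3 p.2.1 q3 *
          WeylV a4 b4 p.2.2 q4 * gvec y ((q1, q2), (q3, q4))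
      = (∑ q1, ∑ q2, WeylV a1 b1 p.1.1 q1 * WeylV a2 b2 p.1.2 q2 * WeylV y.1 y.2 q1 q2) *
        (∑ q3, ∑ q4, WeylV a3 b3 p.2.1 q3 * WeylV a4 b4 p.2.2 q4 * WeylV y.1 y.2 q3 q4) := by
        rw [← sum_factor]
        refine Finset.sum_congr rfl fun q1 _ => Finset.sum_congr rfl fun q2 _ =>
          Finset.sum_congr rfl fun q3 _ => Finset.sum_congr rfl fun q4 _ => ?_
        simp only [gvec]
        ring
    _ = (chi (phiW (a1, b1) (a2, b2) y) *
          WeylV (a1 + y.1 + a2) (b1 + y.2 + b2) p.1.1 p.1.2) *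
        (chi (phiW (a3, b3) (a4, b4) y) *
          WeylV (a3 + y.1 + a4) (b3 + y.2 + b4) p.2.1 p.2.2) := by
        rw [h1, h2]; rfl
    _ = _ := by ring

lemma phiW_same {n : ℕ} (v y : Vn n) : phiW (v.1, v.2) (v.1, v.2) y = sympForm v y := by
  refine Finset.sum_congr rfl fun i _ => ?_
  exact (by decide : ∀ A B C D : ZMod 2,
    A * B + C * B + A * B + A * D = A * D + B * C) (v.1 i) (v.2 i) (y.1 i) (y.2 i)

lemma phiW_zero {n : ℕ} (y : Vn n) :
    phiW ((0 : Fin n → ZMod 2), (0 : Fin n → ZMod 2)) (0, 0) y = 0 := by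
  refine Finset.sum_eq_zero fun i _ => ?_
  simp

lemma opU_g {n : ℕ} (v y : Vn n) : (opU v).mulVec (gvec y) = gvec (v + y) := by
  have e1 : opU v = ((WeylV v.1 v.2 ⊗ₖ WeylV (0 : Fin n → ZMod 2) 0) ⊗ₖ
      (WeylV v.1 v.2 ⊗ₖ WeylV (0 : Fin n → ZMod 2) 0)) := by
    rw [opU, VtimesI, weyl_zero]
  funext p
  rw [e1, quad_mulVec_g, chi_mul_self, one_mul]
  simp only [gvec, add_zero, Prod.fst_add, Prod.snd_add]

lemma opW1_g {n : ℕ} (v y : Vn n) (hvy : sympForm v y = 0) :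
    (opW1 v).mulVec (gvec y) = gvec y := by
  have e1 : opW1 v = ((WeylV v.1 v.2 ⊗ₖ WeylV v.1 v.2) ⊗ₖ
      (WeylV (0 : Fin n → ZMod 2) 0 ⊗ₖ WeylV (0 : Fin n → ZMod 2) 0)) := by
    rw [opW1, VtimesV, weyl_zero, Matrix.one_kronecker_one]
  funext p
  rw [e1, quad_mulVec_g, phiW_same, hvy, chi_zero, phiW_zero, chi_zero]
  simp only [one_mul, z2_aba, zero_add, add_zero, gvec]

lemma opW2_g {n : ℕ} (v y : Vn n) (hvy : sympForm v y = 0) :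
    (opW2 v).mulVec (gvec y) = gvec y := by
  have e1 : opW2 v = ((WeylV (0 : Fin n → ZMod 2) 0 ⊗ₖ WeylV (0 : Fin n → ZMod 2) 0) ⊗ₖ
      (WeylV v.1 v.2 ⊗ₖ WeylV v.1 v.2)) := by
    rw [opW2, VtimesV, weyl_zero, Matrix.one_kronecker_one]
  funext p
  rw [e1, quad_mulVec_g, phiW_same, hvy, chi_zero, phiW_zero, chi_zero]
  simp only [one_mul, z2_aba, zero_add, add_zero, gvec]

lemma opS_g {n : ℕ} (v y : Vn n) : (opS v).mulVec (gvec y) = gvec y := by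
  have e1 : opS v = ((WeylV v.1 v.2 ⊗ₖ WeylV v.1 v.2) ⊗ₖ
      (WeylV v.1 v.2 ⊗ₖ WeylV v.1 v.2)) := by
    rw [opS, VtimesV]
  funext p
  rw [e1, quad_mulVec_g, chi_mul_self, one_mul]
  simp only [z2_aba, gvec]

lemma sigma_eq {n : ℕ} (u : Fin n → Vn n) :
    sigmaVec u = ((((Real.sqrt (2 ^ n))⁻¹ : ℝ) : ℂ)) ^ 3 •
      ∑ cc : Fin n → ZMod 2, gvec (∑ i, cc i • u i) := by
  funext p
  simp only [sigmaVec, Bell_apply, Pi.smul_apply, Finset.sum_apply, smul_eq_mul, gvec]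
  rw [Finset.mul_sum, Finset.mul_sum]
  exact Finset.sum_congr rfl fun cc _ => by ring

lemma stab_of {n : ℕ} (u : Fin n → Vn n)
    (M : Matrix ((Vn n) × (Vn n)) ((Vn n) × (Vn n)) ℂ)
    (π : (Fin n → ZMod 2) ≃ (Fin n → ZMod 2))
    (hM : ∀ cc : Fin n → ZMod 2,
      M.mulVec (gvec (∑ i, cc i • u i)) = gvec (∑ i, (π cc) i • u i)) :
    M.mulVec (sigmaVec u) = sigmaVec u := by
  rw [sigma_eq, Matrix.mulVec_smul]
  congr 1
  have h1 : M.mulVec (∑ cc : Fin n → ZMod 2, gvec (∑ i, cc i • u i))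
      = ∑ cc : Fin n → ZMod 2, M.mulVec (gvec (∑ i, cc i • u i)) := by
    rw [← Matrix.mulVecLin_apply, map_sum]
    simp only [Matrix.mulVecLin_apply]
  rw [h1]
  simp only [hM]
  exact Fintype.sum_equiv π _ _ (fun cc => rfl)

lemma single_smul_sum {n : ℕ} (u : Fin n → Vn n) (i0 : Fin n) :
    ∑ j, (Pi.single i0 1 : Fin n → ZMod 2) j • u j = u i0 := by
  rw [Finset.sum_eq_single i0]
  · simp
  · intro j _ hj
    rw [Pi.single_apply, if_neg hj, zero_smul]
  · intro hm; exact absurd (Finset.mem_univ _) hm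

lemma quad_pow {n : ℕ} (M : Matrix ((Vn n) × (Vn n)) ((Vn n) × (Vn n)) ℂ)
    (q : Vn n × Vn n × Vn n × Vn n) (hM : M = quadOf q) (ε : ZMod 2) :
    M ^ ε.val = quadOf (ε • q) := by
  rcases (by decide : ∀ z : ZMod 2, z = 0 ∨ z = 1) ε with rfl | rfl
  · rw [show (0 : ZMod 2).val = 0 from rfl, pow_zero, zero_smul, quad_zero]
  · rw [show (1 : ZMod 2).val = 1 from rfl, pow_one, one_smul, hM]

lemma opU_quad {n : ℕ} (v : Vn n) : opU v = quadOf (v, 0, v, 0) := by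
  simp only [opU, VtimesI, quadOf, Wv, Prod.fst_zero, Prod.snd_zero, weyl_zero]

lemma opW1_quad {n : ℕ} (v : Vn n) : opW1 v = quadOf (v, v, 0, 0) := by
  simp only [opW1, VtimesV, quadOf, Wv, Prod.fst_zero, Prod.snd_zero, weyl_zero,
    Matrix.one_kronecker_one]

lemma opW2_quad {n : ℕ} (v : Vn n) : opW2 v = quadOf (0, 0, v, v) := by
  simp only [opW2, VtimesV, quadOf, Wv, Prod.fst_zero, Prod.snd_zero, weyl_zero,
    Matrix.one_kronecker_one]

lemma opS_quad {n : ℕ} (v : Vn n) : opS v = quadOf (v, v, v, v) := by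
  simp only [opS, VtimesV, quadOf, Wv]

lemma sigma_ne_zero {n : ℕ} (u : Fin n → Vn n) : sigmaVec u ≠ 0 := by
  intro h0
  have h1 : sigmaVec u (((0, 0), (0, 0)) : (Vn n) × (Vn n)) = 0 := by rw [h0]; rfl
  rw [sigma_eq] at h1
  simp only [Pi.smul_apply, Finset.sum_apply, smul_eq_mul, gvec] at h1
  have hterm : ∀ cc : Fin n → ZMod 2,
      WeylV (∑ i, cc i • u i).1 (∑ i, cc i • u i).2 (0 : Fin n → ZMod 2) 0 *
        WeylV (∑ i, cc i • u i).1 (∑ i, cc i • u i).2 (0 : Fin n → ZMod 2) 0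
      = if (∑ i, cc i • u i).2 = 0 then 1 else 0 := by
    intro cc
    by_cases hc : (∑ i, cc i • u i).2 = 0
    · rw [if_pos hc, weyl_apply', if_pos (by rw [hc, add_zero])]
      exact chi_mul_self _
    · rw [if_neg hc, weyl_apply',
        if_neg (fun hh => hc (by rw [← zero_add ((∑ i, cc i • u i).2)]; exact hh.symm)),
        zero_mul]
  rw [Finset.sum_congr rfl (fun cc _ => hterm cc), Finset.sum_boole] at h1
  rcases mul_eq_zero.1 h1 with hc | hc
  · have : ((Real.sqrt (2 ^ n))⁻¹ : ℝ) ≠ 0 := by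
      refine inv_ne_zero (ne_of_gt (Real.sqrt_pos.2 ?_))
      positivity
    exact pow_ne_zero 3 (Complex.ofReal_ne_zero.2 this) hc
  · rw [Nat.cast_eq_zero, Finset.card_eq_zero] at hc
    have hmem : (0 : Fin n → ZMod 2) ∈ Finset.filter
        (fun cc : Fin n → ZMod 2 => (∑ i, cc i • u i).2 = 0) Finset.univ := by
      simp
    rw [hc] at hmem
    exact absurd hmem (Finset.notMem_empty _)

/-- Let L be an n-dimensional subspace of Z_2^{2n} with symplectic dual L^⊥
spanned by the basis u_1,...,u_n, h_1,...,h_n a basis of L extended by s_1,...,s_n to a basis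
of Z_2^{2n}. Then the 4n operators V_{u_i}⊗I⊗V_{u_i}⊗I, V_{h_i}⊗V_{h_i}⊗I⊗I,
I⊗I⊗V_{h_i}⊗V_{h_i}, V_{s_i}^{⊗4} are independent (the only product of a subset equal to
±identity is the empty product), and the state |σ_L⟩ = 2^{-n/2} ∑_{y ∈ L^⊥} |Φ_y⟩⊗|Φ_y⟩ is a
nonzero 4n-qubit state stabilized by all of them. -/
theorem stmt_19 {n : ℕ}
    (u h s : Fin n → (Fin n → ZMod 2) × (Fin n → ZMod 2))
    (hu : LinearIndependent (ZMod 2) u)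
    (hh : LinearIndependent (ZMod 2) h)
    (hhs : LinearIndependent (ZMod 2) (Sum.elim h s))
    (hspan : Submodule.span (ZMod 2) (Set.range (Sum.elim h s)) = ⊤)
    (hdual : ∀ y, y ∈ Submodule.span (ZMod 2) (Set.range u) ↔
      ∀ x ∈ Submodule.span (ZMod 2) (Set.range h), sympForm x y = 0) :
    (∀ e : (Fin n ⊕ Fin n ⊕ Fin n ⊕ Fin n) → ZMod 2,
      ((List.ofFn fun i : Fin n => opU (u i) ^ (e (Sum.inl i)).val).prod *
       (List.ofFn fun i : Fin n => opW1 (h i) ^ (e (Sum.inr (Sum.inl i))).val).prod *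
       (List.ofFn fun i : Fin n => opW2 (h i) ^ (e (Sum.inr (Sum.inr (Sum.inl i)))).val).prod *
       (List.ofFn fun i : Fin n => opS (s i) ^ (e (Sum.inr (Sum.inr (Sum.inr i)))).val).prod
          = 1 ∨
       (List.ofFn fun i : Fin n => opU (u i) ^ (e (Sum.inl i)).val).prod *
       (List.ofFn fun i : Fin n => opW1 (h i) ^ (e (Sum.inr (Sum.inl i))).val).prod *
       (List.ofFn fun i : Fin n => opW2 (h i) ^ (e (Sum.inr (Sum.inr (Sum.inl i)))).val).prod *
       (List.ofFn fun i : Fin n => opS (s i) ^ (e (Sum.inr (Sum.inr (Sum.inr i)))).val).prod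
          = -1) → e = 0) ∧
    sigmaVec u ≠ 0 ∧
    (∀ i, (opU (u i)).mulVec (sigmaVec u) = sigmaVec u) ∧
    (∀ i, (opW1 (h i)).mulVec (sigmaVec u) = sigmaVec u) ∧
    (∀ i, (opW2 (h i)).mulVec (sigmaVec u) = sigmaVec u) ∧
    (∀ i, (opS (s i)).mulVec (sigmaVec u) = sigmaVec u) := by
  have hyL : ∀ cc : Fin n → ZMod 2,
      (∑ i, cc i • u i) ∈ Submodule.span (ZMod 2) (Set.range u) := fun cc =>
    Submodule.sum_mem _ fun j _ => Submodule.smul_mem _ _ (Submodule.subset_span ⟨j, rfl⟩)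
  have hsymp : ∀ (i : Fin n) (cc : Fin n → ZMod 2),
      sympForm (h i) (∑ j, cc j • u j) = 0 := fun i cc =>
    (hdual _).1 (hyL cc) (h i) (Submodule.subset_span ⟨i, rfl⟩)
  refine ⟨?_, sigma_ne_zero u, ?_, ?_, ?_, ?_⟩
  · -- independence
    intro e hprod
    set L1 : List (Vn n × Vn n × Vn n × Vn n) :=
      List.ofFn (fun i => (e (Sum.inl i)) • ((u i, 0, u i, 0) : Vn n × Vn n × Vn n × Vn n))
      with hL1
    set L2 : List (Vn n × Vn n × Vn n × Vn n) :=
      List.ofFn (fun i => (e (Sum.inr (Sum.inl i))) •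
        ((h i, h i, 0, 0) : Vn n × Vn n × Vn n × Vn n)) with hL2
    set L3 : List (Vn n × Vn n × Vn n × Vn n) :=
      List.ofFn (fun i => (e (Sum.inr (Sum.inr (Sum.inl i)))) •
        ((0, 0, h i, h i) : Vn n × Vn n × Vn n × Vn n)) with hL3
    set L4 : List (Vn n × Vn n × Vn n × Vn n) :=
      List.ofFn (fun i => (e (Sum.inr (Sum.inr (Sum.inr i)))) •
        ((s i, s i, s i, s i) : Vn n × Vn n × Vn n × Vn n)) with hL4
    have hA : (List.ofFn fun i : Fin n => opU (u i) ^ (e (Sum.inl i)).val)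
        = List.map quadOf L1 := by
      rw [hL1, List.map_ofFn]
      exact congrArg _ (funext fun i => quad_pow _ _ (opU_quad (u i)) _)
    have hB : (List.ofFn fun i : Fin n => opW1 (h i) ^ (e (Sum.inr (Sum.inl i))).val)
        = List.map quadOf L2 := by
      rw [hL2, List.map_ofFn]
      exact congrArg _ (funext fun i => quad_pow _ _ (opW1_quad (h i)) _)
    have hC : (List.ofFn fun i : Fin n =>
          opW2 (h i) ^ (e (Sum.inr (Sum.inr (Sum.inl i)))).val)
        = List.map quadOf L3 := by
      rw [hL3, List.map_ofFn]
      exact congrArg _ (funext fun i => quad_pow _ _ (opW2_quad (h i)) _)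
    have hD : (List.ofFn fun i : Fin n =>
          opS (s i) ^ (e (Sum.inr (Sum.inr (Sum.inr i)))).val)
        = List.map quadOf L4 := by
      rw [hL4, List.map_ofFn]
      exact congrArg _ (funext fun i => quad_pow _ _ (opS_quad (s i)) _)
    obtain ⟨z, hz⟩ := list_prod_quad (L1 ++ L2 ++ L3 ++ L4)
    rw [hA, hB, hC, hD, ← List.prod_append, ← List.prod_append, ← List.prod_append,
      ← List.map_append, ← List.map_append, ← List.map_append, hz] at hprod
    have hT : (L1 ++ L2 ++ L3 ++ L4).sum = 0 := by
      rcases hprod with hp | hp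
      · refine quad_inj (w := chi z) (chi_ne_zero z) ?_
        calc quadOf (L1 ++ L2 ++ L3 ++ L4).sum
            = (chi z * chi z) • quadOf (L1 ++ L2 ++ L3 ++ L4).sum := by
              rw [chi_mul_self, one_smul]
          _ = chi z • (chi z • quadOf (L1 ++ L2 ++ L3 ++ L4).sum) := by rw [smul_smul]
          _ = chi z • 1 := by rw [hp]
      · refine quad_inj (w := -chi z) (neg_ne_zero.2 (chi_ne_zero z)) ?_
        calc quadOf (L1 ++ L2 ++ L3 ++ L4).sum
            = (chi z * chi z) • quadOf (L1 ++ L2 ++ L3 ++ L4).sum := by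
              rw [chi_mul_self, one_smul]
          _ = chi z • (chi z • quadOf (L1 ++ L2 ++ L3 ++ L4).sum) := by rw [smul_smul]
          _ = chi z • (-1) := by rw [hp]
          _ = (-chi z) • 1 := by rw [smul_neg, ← neg_smul]
    have hsum : (L1 ++ L2 ++ L3 ++ L4).sum
        = (∑ i, (e (Sum.inl i)) • ((u i, 0, u i, 0) : Vn n × Vn n × Vn n × Vn n))
          + (∑ i, (e (Sum.inr (Sum.inl i))) •
              ((h i, h i, 0, 0) : Vn n × Vn n × Vn n × Vn n))
          + (∑ i, (e (Sum.inr (Sum.inr (Sum.inl i)))) •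
              ((0, 0, h i, h i) : Vn n × Vn n × Vn n × Vn n))
          + (∑ i, (e (Sum.inr (Sum.inr (Sum.inr i)))) •
              ((s i, s i, s i, s i) : Vn n × Vn n × Vn n × Vn n)) := by
      rw [hL1, hL2, hL3, hL4]
      simp only [List.sum_append, List.sum_ofFn]
    rw [hsum] at hT
    have h2 : (∑ i, e (Sum.inr (Sum.inl i)) • (h i))
        + (∑ i, e (Sum.inr (Sum.inr (Sum.inr i))) • (s i)) = 0 := by
      have h2' := congrArg (fun q : Vn n × Vn n × Vn n × Vn n => q.2.1) hT
      simpa only [Prod.fst_add, Prod.snd_add, Prod.fst_sum, Prod.snd_sum, Prod.smul_fst,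
        Prod.smul_snd, smul_zero, Finset.sum_const_zero, add_zero, zero_add, Prod.fst_zero,
        Prod.snd_zero] using h2'
    have h24 := Fintype.linearIndependent_iff.1 hhs
      (Sum.elim (fun i => e (Sum.inr (Sum.inl i)))
        (fun i => e (Sum.inr (Sum.inr (Sum.inr i)))))
      (by rw [Fintype.sum_sum_type]
          simpa only [Sum.elim_inl, Sum.elim_inr] using h2)
    have he2 : ∀ i, e (Sum.inr (Sum.inl i)) = 0 := fun i => h24 (Sum.inl i)
    have he4 : ∀ i, e (Sum.inr (Sum.inr (Sum.inr i))) = 0 := fun i => h24 (Sum.inr i)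
    have h4 : (∑ i, e (Sum.inr (Sum.inr (Sum.inl i))) • (h i))
        + (∑ i, e (Sum.inr (Sum.inr (Sum.inr i))) • (s i)) = 0 := by
      have h4' := congrArg (fun q : Vn n × Vn n × Vn n × Vn n => q.2.2.2) hT
      simpa only [Prod.fst_add, Prod.snd_add, Prod.fst_sum, Prod.snd_sum, Prod.smul_fst,
        Prod.smul_snd, smul_zero, Finset.sum_const_zero, add_zero, zero_add, Prod.fst_zero,
        Prod.snd_zero] using h4'
    have h34 := Fintype.linearIndependent_iff.1 hhs
      (Sum.elim (fun i => e (Sum.inr (Sum.inr (Sum.inl i))))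
        (fun i => e (Sum.inr (Sum.inr (Sum.inr i)))))
      (by rw [Fintype.sum_sum_type]
          simpa only [Sum.elim_inl, Sum.elim_inr] using h4)
    have he3 : ∀ i, e (Sum.inr (Sum.inr (Sum.inl i))) = 0 := fun i => h34 (Sum.inl i)
    have h1 : ∑ i, e (Sum.inl i) • u i = 0 := by
      have h1' := congrArg (fun q : Vn n × Vn n × Vn n × Vn n => q.1) hT
      simpa only [Prod.fst_add, Prod.snd_add, Prod.fst_sum, Prod.snd_sum, Prod.smul_fst,
        Prod.smul_snd, smul_zero, Finset.sum_const_zero, add_zero, zero_add, Prod.fst_zero,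
        Prod.snd_zero, he2, he4, zero_smul] using h1'
    have he1 := Fintype.linearIndependent_iff.1 hu (fun i => e (Sum.inl i)) h1
    funext k
    rcases k with i | i | i | i
    · exact he1 i
    · exact he2 i
    · exact he3 i
    · exact he4 i
  · intro i
    refine stab_of u _ (Equiv.addLeft (Pi.single i 1)) (fun cc => ?_)
    rw [opU_g]
    exact congrArg gvec (show u i + ∑ j, cc j • u j
      = ∑ j, ((Pi.single i 1 : Fin n → ZMod 2) + cc) j • u j by
      simp only [Pi.add_apply, add_smul, Finset.sum_add_distrib, single_smul_sum])
  · intro i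
    exact stab_of u _ (Equiv.refl _) (fun cc => opW1_g (h i) _ (hsymp i cc))
  · intro i
    exact stab_of u _ (Equiv.refl _) (fun cc => opW2_g (h i) _ (hsymp i cc))
  · intro i
    exact stab_of u _ (Equiv.refl _) (fun cc => opS_g (s i) _)
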